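/- For every integer p ≥ 1, D_p = (−1)^p · [ Σ_{m=1}^{⌊p/2⌋} 2^{2m+1}·binom(2p−2m−1, p−1)·η(2m) − 2^{2p−1} + binom(2p−1, p−1) ], where η(s) = Σ_{n=1}^∞ (−1)^{n−1}/n^s is the Dirichlet eta function. -/

import Mathlib

open Real

/-- `D p = Σ_{n=1}^∞ (−1)^{n−1} 2^{2p}/(n^p (n+2)^p)`. -/
noncomputable def D (p : ℕ) : ℝ :=
  ∑' n : ℕ, (-1 : ℝ) ^ n * (2 : ℝ) ^ (2 * p) / (((n : ℝ) + 1) ^ p * ((n : ℝ) + 3) ^ p)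

/-- Dirichlet eta function at a natural argument: `η(s) = Σ_{n=1}^∞ (−1)^{n−1}/n^s`. -/
noncomputable def etaR (s : ℕ) : ℝ := ∑' n : ℕ, (-1 : ℝ) ^ n / ((n : ℝ) + 1) ^ s

/-!
Put `x = n + 1`. The partial fraction expansion of `2^(2p) / (x^p (x+2)^p)`, obtained by
iterating `1 / (x y) = (1/x - 1/y) / (y - x)`, is
`(-1)^p ∑_{j=1}^p binom(2p-j-1, p-1) 2^j ((-1)^j / x^j + 1 / (x+2)^j)`.
Against `(-1)^n`, the `j`-th bracket sums to `2 η(j) - 1 + 2^(-j)` for even `j`; for odd `j`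
the two series telescope to `2^(-j) - 1`, which also handles `j = 1`, where the series for
`η(1)` converges only conditionally (so `etaR 1` is the junk value `0`). The two resulting
binomial sums are the hockey-stick identity and the expansion evaluated at `x = -1`.
-/

open Finset Filter Topology

lemma sum_range_eq_sum_Icc_sub {M : Type*} [AddCommMonoid M] (f : ℕ → M) (p : ℕ) :
    ∑ i ∈ range p, f i = ∑ j ∈ Icc 1 p, f (p - j) := by
  refine sum_nbij' (p - ·) (p - ·) ?_ ?_ ?_ ?_ ?_
  all_goals intro i hi; simp only [mem_range, mem_Icc] at hi ⊢
  all_goals first | omega | congr 1; omega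

lemma multichoose_sub_eq_choose {p j : ℕ} (hjp : j ≤ p) :
    p.multichoose (p - j) = (2 * p - j - 1).choose (p - 1) := by
  rw [Nat.multichoose_eq, show p + (p - j) - 1 = 2 * p - j - 1 by omega]
  exact Nat.choose_symm_of_eq_add (by omega)

section PartialFractions

variable {K : Type*} [Field K]

/-- The terms with a pole at `x = 0` in the partial fraction expansion of
`1 / (x ^ a * (x + d) ^ b)`. -/
def partialFractionSum (x d : K) (a b : ℕ) : K :=
  ∑ i ∈ range a, (-1) ^ i * b.multichoose i / (d ^ (b + i) * x ^ (a - i))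

@[simp]
lemma partialFractionSum_zero_left (x d : K) (b : ℕ) : partialFractionSum x d 0 b = 0 := by
  simp [partialFractionSum]

lemma partialFractionSum_zero_right (x d : K) {a : ℕ} (ha : a ≠ 0) :
    partialFractionSum x d a 0 = (x ^ a)⁻¹ := by
  obtain ⟨a, rfl⟩ := Nat.exists_eq_succ_of_ne_zero ha
  simp [partialFractionSum, sum_range_succ']

lemma partialFractionSum_succ_succ (x : K) {d : K} (hd : d ≠ 0) (a b : ℕ) :
    partialFractionSum x d (a + 1) (b + 1) =
      (partialFractionSum x d (a + 1) b - partialFractionSum x d a (b + 1)) / d := by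
  simp only [partialFractionSum]
  rw [sum_range_succ', sum_range_succ' _ a, add_sub_right_comm, ← sum_sub_distrib, add_div,
    sum_div]
  congr 1
  · refine sum_congr rfl fun i _ => ?_
    rw [Nat.multichoose_succ_succ]
    simp only [Nat.cast_add, pow_succ, Nat.add_sub_add_right]
    field_simp
    ring
  · simp only [Nat.multichoose_zero_right, add_zero, Nat.sub_zero, pow_succ]
    field_simp

theorem inv_pow_mul_pow_eq_partialFractionSum {x y : K} (hx : x ≠ 0) (hy : y ≠ 0) (hxy : x ≠ y) :
    ∀ a b : ℕ, a + b ≠ 0 →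
      (x ^ a * y ^ b)⁻¹ = partialFractionSum x (y - x) a b + partialFractionSum y (x - y) b a
  | 0, b, hb => by simp [partialFractionSum_zero_right _ _ (by simpa using hb)]
  | a + 1, 0, _ => by simp [partialFractionSum_zero_right]
  | a + 1, b + 1, _ => by
    have h₁ := inv_pow_mul_pow_eq_partialFractionSum hx hy hxy (a + 1) b (by omega)
    have h₂ := inv_pow_mul_pow_eq_partialFractionSum hx hy hxy a (b + 1) (by omega)
    rw [partialFractionSum_succ_succ _ (sub_ne_zero.2 hxy.symm),
      partialFractionSum_succ_succ _ (sub_ne_zero.2 hxy), eq_sub_of_add_eq h₁.symm,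
      eq_sub_of_add_eq h₂.symm]
    have : y - x ≠ 0 := sub_ne_zero.2 hxy.symm
    have : x - y ≠ 0 := sub_ne_zero.2 hxy
    field_simp
    ring

theorem two_pow_two_mul_div_eq_sum {x : K} (hx : x ≠ 0) (hx₂ : x + 2 ≠ 0) (h2 : (2 : K) ≠ 0)
    {p : ℕ} (hp : p ≠ 0) :
    (2 : K) ^ (2 * p) / (x ^ p * (x + 2) ^ p) = (-1) ^ p * ∑ j ∈ Icc 1 p,
      ((2 * p - j - 1).choose (p - 1) : K) * 2 ^ j * ((-1) ^ j / x ^ j + 1 / (x + 2) ^ j) := by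
  rw [div_eq_mul_inv, inv_pow_mul_pow_eq_partialFractionSum hx hx₂ (by simpa using h2) p p
    (by omega), partialFractionSum, partialFractionSum, ← sum_add_distrib,
    sum_range_eq_sum_Icc_sub, mul_sum, mul_sum]
  refine sum_congr rfl fun j hj => ?_
  obtain ⟨-, hjp⟩ := mem_Icc.1 hj
  rw [← multichoose_sub_eq_choose hjp]
  obtain ⟨i, rfl⟩ : ∃ i, p = i + j := ⟨p - j, by omega⟩
  have hsign : (-2 : K) ^ (i + j + i) = (-1) ^ j * 2 ^ (i + j + i) := by
    rw [neg_pow, show i + j + i = 2 * i + j by ring, pow_add (-1 : K), pow_mul, neg_one_sq,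
      one_pow, one_mul]
  simp only [add_sub_cancel_left, show x - (x + 2) = -2 by ring, Nat.add_sub_cancel,
    Nat.add_sub_cancel_left, hsign]
  rcases Nat.even_or_odd j with hj | hj <;> simp only [pow_add, hj.neg_one_pow] <;> field_simp <;> ring

end PartialFractions

theorem sum_Icc_choose_two_mul_sub_mul_two_pow {p : ℕ} (hp : p ≠ 0) :
    ∑ j ∈ Icc 1 p, (2 * p - j - 1).choose (p - 1) * 2 ^ j = 2 ^ (2 * p - 1) := by
  have h := two_pow_two_mul_div_eq_sum (K := ℚ) (x := -1) (by norm_num) (by norm_num)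
    (by norm_num) hp
  have hsign : ((-1 : ℚ) ^ p) ^ 2 = 1 := by rw [← pow_mul, mul_comm, pow_mul, neg_one_sq, one_pow]
  have h2p : (2 : ℚ) ^ (2 * p) = 2 * 2 ^ (2 * p - 1) := by
    rw [← pow_succ']; congr 1; omega
  rw [show (-1 : ℚ) + 2 = 1 by norm_num, one_pow, mul_one, h2p] at h
  simp only [one_pow, div_one, div_self (pow_ne_zero _ (by norm_num : (-1 : ℚ) ≠ 0))] at h
  rw [← sum_mul] at h
  rw [div_eq_iff (pow_ne_zero _ (by norm_num))] at h
  rw [← Nat.cast_inj (R := ℚ)]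
  push_cast
  linear_combination (-1 / 2 : ℚ) * h -
    (∑ j ∈ Icc 1 p, ((2 * p - j - 1).choose (p - 1) : ℚ) * 2 ^ j) * hsign

theorem sum_Icc_choose_two_mul_sub {p : ℕ} (hp : p ≠ 0) :
    ∑ j ∈ Icc 1 p, (2 * p - j - 1).choose (p - 1) = (2 * p - 1).choose (p - 1) := by
  obtain ⟨q, rfl⟩ := Nat.exists_eq_add_one_of_ne_zero hp
  calc ∑ j ∈ Icc 1 (q + 1), (2 * (q + 1) - j - 1).choose (q + 1 - 1)
      = ∑ j ∈ Icc 1 (q + 1), (q + 1 - j + q).choose q :=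
        sum_congr rfl fun j hj => by congr 1; simp only [mem_Icc] at hj; omega
    _ = (2 * (q + 1) - 1).choose (q + 1 - 1) := by
      rw [← sum_range_eq_sum_Icc_sub (fun i => (i + q).choose q), Nat.sum_range_add_choose,
        show q + q + 1 = 2 * q + 1 by ring, Nat.choose_symm_half]
      congr 1

theorem sum_Icc_ite_even {M : Type*} [AddCommMonoid M] (f : ℕ → M) (p : ℕ) :
    ∑ j ∈ Icc 1 p, (if Even j then f j else 0) = ∑ m ∈ Icc 1 (p / 2), f (2 * m) := by
  rw [← sum_filter]
  refine (sum_nbij' (2 * ·) (· / 2) ?_ ?_ ?_ ?_ ?_).symm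
  all_goals intro i hi; simp only [mem_Icc, mem_filter, Nat.even_iff] at hi ⊢
  all_goals omega

section Telescoping

variable {G : Type*} [AddCommGroup G]

lemma sum_range_sub_add_two (f : ℕ → G) (N : ℕ) :
    ∑ i ∈ range N, (f i - f (i + 2)) = f 0 + f 1 - f N - f (N + 1) := by
  have h : ∀ i, f i - f (i + 2) = (f i - f (i + 1)) + (f (i + 1) - f (i + 1 + 1)) := fun i => by
    abel
  simp only [h, sum_add_distrib, sum_range_sub', sum_range_sub' (fun i => f (i + 1))]
  abel

lemma hasSum_sub_add_two [TopologicalSpace G] [IsTopologicalAddGroup G] [T2Space G] {f : ℕ → G}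
    (hs : Summable fun n => f n - f (n + 2)) (hf : Tendsto f atTop (𝓝 0)) :
    HasSum (fun n => f n - f (n + 2)) (f 0 + f 1) := by
  rw [hs.hasSum_iff_tendsto_nat]
  simp only [sum_range_sub_add_two]
  simpa using (tendsto_const_nhds.sub hf).sub (hf.comp (tendsto_add_atTop_nat 1))

end Telescoping

lemma summable_sub_add_two_of_antitone {b : ℕ → ℝ} (hb : Antitone b) (hb₀ : ∀ n, 0 ≤ b n) :
    Summable fun n => b n - b (n + 2) :=
  summable_of_sum_range_le (c := b 0 + b 1) (fun n => sub_nonneg.2 (hb (by omega))) fun N => by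
    rw [sum_range_sub_add_two]
    linarith [hb₀ N, hb₀ (N + 1)]

noncomputable def etaTerm (j n : ℕ) : ℝ := (-1) ^ n / ((n : ℝ) + 1) ^ j

lemma norm_etaTerm (j n : ℕ) : ‖etaTerm j n‖ = 1 / ((n : ℝ) + 1) ^ j := by
  simp [etaTerm, abs_of_nonneg (by positivity : (0 : ℝ) ≤ n + 1)]

lemma summable_etaTerm {j : ℕ} (hj : 2 ≤ j) : Summable (etaTerm j) := by
  refine .of_norm ?_
  simp only [norm_etaTerm]
  exact_mod_cast (summable_nat_add_iff 1).2 (Real.summable_one_div_nat_pow.2 hj)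

lemma tendsto_etaTerm {j : ℕ} (hj : j ≠ 0) : Tendsto (etaTerm j) atTop (𝓝 0) := by
  refine squeeze_zero_norm (fun n => ?_) tendsto_one_div_add_atTop_nhds_zero_nat
  rw [norm_etaTerm]
  gcongr
  exact le_self_pow₀ (by linarith [n.cast_nonneg (α := ℝ)]) hj

lemma summable_etaTerm_sub (j : ℕ) :
    Summable fun n => etaTerm j n - etaTerm j (n + 2) := by
  set b : ℕ → ℝ := fun n => 1 / ((n : ℝ) + 1) ^ j
  have hb : Antitone b := fun m n hmn => by simp only [b]; gcongr
  refine (summable_sub_add_two_of_antitone hb fun n => by positivity).of_norm_bounded fun n => ?_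
  have : etaTerm j n - etaTerm j (n + 2) = (-1) ^ n * (b n - b (n + 2)) := by
    simp only [etaTerm, b]; push_cast; ring
  rw [this, norm_mul, norm_pow, norm_neg, norm_one, one_pow, one_mul,
    Real.norm_of_nonneg (sub_nonneg.2 (hb (by omega)))]

lemma hasSum_etaTerm_pair {j : ℕ} (hj : j ≠ 0) :
    HasSum (fun n => (-1) ^ j * etaTerm j n + etaTerm j (n + 2))
      ((if Even j then 2 * etaR j else 0) - (1 - 1 / 2 ^ j)) := by
  rcases Nat.even_or_odd j with he | ho
  · have hs := summable_etaTerm (j := j) (by obtain ⟨k, rfl⟩ := he; omega)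
    have := hs.hasSum.add ((hasSum_nat_add_iff' 2).2 hs.hasSum)
    simp only [he.neg_one_pow, one_mul, if_pos he]
    convert this using 1
    norm_num [etaR, etaTerm, sum_range_succ]
    ring
  · have hv : (0 : ℝ) - (1 - 1 / 2 ^ j) = -(etaTerm j 0 + etaTerm j 1) := by
      norm_num [etaTerm]
      ring
    simp only [ho.neg_one_pow, Nat.not_even_iff_odd.2 ho, if_false, neg_one_mul, neg_add_eq_sub, hv]
    simpa only [neg_sub] using
      (hasSum_sub_add_two (summable_etaTerm_sub j) (tendsto_etaTerm hj)).neg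

lemma D_eq_sum {p : ℕ} (hp : p ≠ 0) :
    D p = (-1) ^ p * ∑ j ∈ Icc 1 p, ((2 * p - j - 1).choose (p - 1) : ℝ) * 2 ^ j *
      ((if Even j then 2 * etaR j else 0) - (1 - 1 / 2 ^ j)) := by
  have hterm : ∀ n : ℕ,
      (-1 : ℝ) ^ n * (2 : ℝ) ^ (2 * p) / (((n : ℝ) + 1) ^ p * ((n : ℝ) + 3) ^ p) =
        ∑ j ∈ Icc 1 p, (-1) ^ p * ((2 * p - j - 1).choose (p - 1) * 2 ^ j) *
          ((-1) ^ j * etaTerm j n + etaTerm j (n + 2)) := fun n => by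
    rw [mul_div_assoc, show (n : ℝ) + 3 = n + 1 + 2 by ring,
      two_pow_two_mul_div_eq_sum (by positivity) (by positivity) two_ne_zero hp, mul_sum, mul_sum]
    refine sum_congr rfl fun j _ => ?_
    simp only [etaTerm]
    push_cast
    ring
  have hsum := hasSum_sum fun j (hj : j ∈ Icc 1 p) =>
    (hasSum_etaTerm_pair (j := j) (by rw [mem_Icc] at hj; omega)).mul_left
      ((-1) ^ p * (((2 * p - j - 1).choose (p - 1) : ℝ) * 2 ^ j))
  rw [D, tsum_congr hterm, hsum.tsum_eq, mul_sum]
  exact sum_congr rfl fun j _ => by ring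

theorem D_eq_eta_combination (p : ℕ) (hp : 1 ≤ p) :
    D p = (-1 : ℝ) ^ p *
      ((∑ m ∈ Finset.Icc 1 (p / 2),
          (2 : ℝ) ^ (2 * m + 1) * (Nat.choose (2 * p - 2 * m - 1) (p - 1) : ℝ) * etaR (2 * m))
        - (2 : ℝ) ^ (2 * p - 1) + (Nat.choose (2 * p - 1) (p - 1) : ℝ)) := by
  have hp₀ : p ≠ 0 := by omega
  have hsplit : ∀ j ∈ Icc 1 p, ((2 * p - j - 1).choose (p - 1) : ℝ) * 2 ^ j *
      ((if Even j then 2 * etaR j else 0) - (1 - 1 / 2 ^ j)) =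
        (if Even j then 2 ^ (j + 1) * ((2 * p - j - 1).choose (p - 1) : ℝ) * etaR j else 0) -
          ((2 * p - j - 1).choose (p - 1) : ℝ) * 2 ^ j + ((2 * p - j - 1).choose (p - 1) : ℝ) :=
    fun j _ => by split_ifs <;> field_simp <;> ring
  have hpow : ∑ j ∈ Icc 1 p, ((2 * p - j - 1).choose (p - 1) : ℝ) * 2 ^ j = 2 ^ (2 * p - 1) := by
    exact_mod_cast sum_Icc_choose_two_mul_sub_mul_two_pow hp₀
  have hchoose : ∑ j ∈ Icc 1 p, ((2 * p - j - 1).choose (p - 1) : ℝ) =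
      (2 * p - 1).choose (p - 1) := by
    exact_mod_cast sum_Icc_choose_two_mul_sub hp₀
  rw [D_eq_sum hp₀, sum_congr rfl hsplit, sum_add_distrib, sum_sub_distrib, sum_Icc_ite_even,
    hpow, hchoose]
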